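/- Let f : ℝ^p → ℝ be μ-strongly convex and L-smooth with 0 < μ ≤ L, let x⋆ be its (unique) minimizer, and let 0 < α ≤ 1/L. Then for every x ∈ ℝ^p and every (inexact gradient direction) g ∈ ℝ^p, ‖x − αg − x⋆‖² ≤ (1 − μα)‖x − x⋆‖² + (α/μ)‖∇f(x) − g‖². -/

import Mathlib

/-!
Split `x - α g - x⋆ = (x - α ∇f(x) - x⋆) + α (∇f(x) - g)`. The exact gradient step contracts by
the factor `1 - μα`: `q = ∇f(x) - μ (x - x⋆)` is the gradient of the convex, `(L - μ)`-smooth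
function `f - μ/2 ‖· - x⋆‖²`, and comparing strong convexity with the descent lemma along
`x - t q` yields `‖q‖² ≤ 2 (L - μ) ⟪q, x - x⋆⟫`, which is exactly what `αL ≤ 1` needs.
The error term is then absorbed by convexity of `s ↦ s²` with weights `1 - μα` and `μα`.
-/

open Set InnerProductSpace

theorem le_two_mul_mul_of_forall_mul_sub_sq_mul_le {a b K : ℝ} (hK : 0 ≤ K)
    (h : ∀ t, t * a - K / 2 * t ^ 2 * a ≤ b) : a ≤ 2 * K * b := by
  rcases hK.eq_or_lt with rfl | hK
  · by_contra! hpos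
    have := h ((b + 1) / a)
    rw [div_mul_cancel₀ _ (by linarith)] at this
    linarith
  · have := h K⁻¹
    field_simp at this
    linarith

theorem sq_one_sub_mul_add_mul_le {μ α a b : ℝ} (hμ : 0 < μ) (hα0 : 0 ≤ α) (hαμ : μ * α ≤ 1)
    (ha : 0 ≤ a) (hb : 0 ≤ b) :
    ((1 - μ * α) * a + α * b) ^ 2 ≤ (1 - μ * α) * a ^ 2 + α / μ * b ^ 2 := by
  have hconv := (convexOn_pow 2).2 (mem_Ici.2 ha) (mem_Ici.2 (div_nonneg hb hμ.le))
    (sub_nonneg.2 hαμ) (mul_nonneg hμ.le hα0) (sub_add_cancel 1 (μ * α))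
  simp only [smul_eq_mul] at hconv
  calc ((1 - μ * α) * a + α * b) ^ 2 = ((1 - μ * α) * a + μ * α * (b / μ)) ^ 2 := by
        field_simp
    _ ≤ (1 - μ * α) * a ^ 2 + μ * α * (b / μ) ^ 2 := hconv
    _ = (1 - μ * α) * a ^ 2 + α / μ * b ^ 2 := by field_simp

section

variable {E : Type*} [NormedAddCommGroup E] [InnerProductSpace ℝ E] [CompleteSpace E]

theorem IsLocalMin.gradient_eq_zero {f : E → ℝ} {a : E} (h : IsLocalMin f a) :
    gradient f a = 0 := by
  simp [gradient, h.fderiv_eq_zero]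

theorem le_add_inner_gradient_add_sq_of_lipschitz_gradient {f : E → ℝ} {L : ℝ}
    (hdiff : Differentiable ℝ f)
    (hsmooth : ∀ x y, ‖gradient f x - gradient f y‖ ≤ L * ‖x - y‖) (x y : E) :
    f y ≤ f x + ⟪gradient f x, y - x⟫_ℝ + L / 2 * ‖y - x‖ ^ 2 := by
  set v := y - x
  set φ : ℝ → ℝ := fun t ↦ f (x + t • v) - t * ⟪gradient f x, v⟫_ℝ - L / 2 * t ^ 2 * ‖v‖ ^ 2
  have hφ (t : ℝ) : HasDerivAt φ
      (⟪gradient f (x + t • v) - gradient f x, v⟫_ℝ - L * t * ‖v‖ ^ 2) t := by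
    have hline : HasDerivAt (fun s : ℝ ↦ x + s • v) v t := by
      simpa using ((hasDerivAt_id t).smul_const v).const_add x
    have hf := ((hdiff _).hasGradientAt.hasFDerivAt).comp_hasDerivAt t hline
    have := (hf.sub ((hasDerivAt_id t).mul_const ⟪gradient f x, v⟫_ℝ)).sub
      (((hasDerivAt_pow 2 t).const_mul (L / 2)).mul_const (‖v‖ ^ 2))
    refine this.congr_deriv ?_
    simp only [toDual_apply_apply, inner_sub_left]
    ring
  have hφ_nonpos : ∀ t ∈ interior (Ici (0 : ℝ)),
      ⟪gradient f (x + t • v) - gradient f x, v⟫_ℝ - L * t * ‖v‖ ^ 2 ≤ 0 := by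
    intro t ht
    rw [interior_Ici, mem_Ioi] at ht
    have := hsmooth (x + t • v) x
    rw [add_sub_cancel_left, norm_smul, Real.norm_of_nonneg ht.le] at this
    nlinarith [real_inner_le_norm (gradient f (x + t • v) - gradient f x) v, norm_nonneg v]
  have hanti := antitoneOn_of_hasDerivWithinAt_nonpos (convex_Ici 0)
    (fun t _ ↦ (hφ t).continuousAt.continuousWithinAt) (fun t _ ↦ (hφ t).hasDerivWithinAt)
    hφ_nonpos
  have h01 : φ 1 ≤ φ 0 := hanti (mem_Ici.2 le_rfl) (mem_Ici.2 zero_le_one) zero_le_one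
  norm_num only [φ, v, one_smul, zero_smul, add_zero, add_sub_cancel] at h01
  linarith

theorem mul_sub_sq_mul_le_inner_gradient_sub_smul {f : E → ℝ} {μ L : ℝ}
    (hdiff : Differentiable ℝ f)
    (hsmooth : ∀ x y, ‖gradient f x - gradient f y‖ ≤ L * ‖x - y‖)
    (hsc : ∀ x y, f y ≥ f x + ⟪gradient f x, y - x⟫_ℝ + μ / 2 * ‖x - y‖ ^ 2)
    {xstar : E} (hstar : gradient f xstar = 0) (x : E) (t : ℝ) :
    t * ‖gradient f x - μ • (x - xstar)‖ ^ 2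
        - (L - μ) / 2 * t ^ 2 * ‖gradient f x - μ • (x - xstar)‖ ^ 2
      ≤ ⟪gradient f x - μ • (x - xstar), x - xstar⟫_ℝ := by
  -- `f(x⋆)` is squeezed between strong convexity at `x` and, at `x - t q`, strong convexity
  -- around `x⋆` plus the descent lemma from `x`.
  set d := x - xstar
  set q := gradient f x - μ • d
  have hG : gradient f x = q + μ • d := by simp [q, d]
  have hx := hsc x xstar
  have hy := hsc xstar (x - t • q)
  have hdesc := le_add_inner_gradient_add_sq_of_lipschitz_gradient hdiff hsmooth x (x - t • q)
  rw [hstar, inner_zero_left, show xstar - (x - t • q) = t • q - d by simp [d]; abel] at hy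
  rw [show x - t • q - x = -(t • q) by abel] at hdesc
  rw [show xstar - x = -d by simp [d], show x - xstar = d from rfl] at hx
  rw [hG] at hx hdesc
  simp only [inner_add_left, inner_neg_right, inner_smul_left, inner_smul_right, norm_neg,
    norm_smul, norm_sub_sq_real, real_inner_self_eq_norm_sq, real_inner_comm d q,
    RCLike.conj_to_real, Real.norm_eq_abs, mul_pow, sq_abs] at hx hy hdesc ⊢
  linear_combination hx + hy + hdesc

theorem norm_sub_smul_gradient_sub_le {f : E → ℝ} {μ L α : ℝ} (hμL : μ ≤ L)
    (hdiff : Differentiable ℝ f)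
    (hsmooth : ∀ x y, ‖gradient f x - gradient f y‖ ≤ L * ‖x - y‖)
    (hsc : ∀ x y, f y ≥ f x + ⟪gradient f x, y - x⟫_ℝ + μ / 2 * ‖x - y‖ ^ 2)
    {xstar : E} (hstar : gradient f xstar = 0) (hα0 : 0 ≤ α) (hαL : α * L ≤ 1) (x : E) :
    ‖x - α • gradient f x - xstar‖ ≤ (1 - μ * α) * ‖x - xstar‖ := by
  set d := x - xstar
  set q := gradient f x - μ • d
  have hline := mul_sub_sq_mul_le_inner_gradient_sub_smul hdiff hsmooth hsc hstar x
  have hqd : 0 ≤ ⟪q, d⟫_ℝ := by simpa using hline 0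
  have hcoco : ‖q‖ ^ 2 ≤ 2 * (L - μ) * ⟪q, d⟫_ℝ :=
    le_two_mul_mul_of_forall_mul_sub_sq_mul_le (sub_nonneg.2 hμL) hline
  have hαμ : 0 ≤ 1 - μ * α := by nlinarith
  have hstep : x - α • gradient f x - xstar = (1 - μ * α) • d - α • q := by
    simp only [q, d]; module
  rw [hstep]
  refine le_of_sq_le_sq ?_ (mul_nonneg hαμ (norm_nonneg _))
  rw [norm_sub_sq_real, norm_smul, norm_smul, inner_smul_left, inner_smul_right,
    Real.norm_of_nonneg hαμ, Real.norm_of_nonneg hα0, real_inner_comm]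
  simp only [RCLike.conj_to_real]
  have hstep_size : α * (L - μ) ≤ 1 - μ * α := by linarith
  nlinarith [mul_le_mul_of_nonneg_left hcoco (mul_nonneg hα0 hα0),
    mul_le_mul_of_nonneg_right hstep_size (mul_nonneg hα0 hqd)]

end

theorem inexact_gradient_descent_contraction {p : ℕ} (μ L α : ℝ)
    (hμ : 0 < μ) (hμL : μ ≤ L)
    (f : EuclideanSpace ℝ (Fin p) → ℝ)
    (hdiff : Differentiable ℝ f)
    (hsmooth : ∀ x y, ‖gradient f x - gradient f y‖ ≤ L * ‖x - y‖)
    (hsc : ∀ x y, f y ≥ f x + inner ℝ (gradient f x) (y - x) + μ / 2 * ‖x - y‖ ^ 2)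
    (xstar : EuclideanSpace ℝ (Fin p)) (hmin : ∀ y, f xstar ≤ f y)
    (hα0 : 0 < α) (hα : α ≤ 1 / L)
    (x g : EuclideanSpace ℝ (Fin p)) :
    ‖x - α • g - xstar‖ ^ 2 ≤
      (1 - μ * α) * ‖x - xstar‖ ^ 2 + (α / μ) * ‖gradient f x - g‖ ^ 2 := by
  have hαL : α * L ≤ 1 := (le_div_iff₀ (hμ.trans_le hμL)).1 hα
  have hαμ : μ * α ≤ 1 := by nlinarith
  have hstar : gradient f xstar = 0 := IsLocalMin.gradient_eq_zero (.of_forall hmin)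
  have hexact := norm_sub_smul_gradient_sub_le hμL hdiff hsmooth hsc hstar hα0.le hαL x
  have hinexact : ‖x - α • g - xstar‖
      ≤ (1 - μ * α) * ‖x - xstar‖ + α * ‖gradient f x - g‖ := calc
    ‖x - α • g - xstar‖ = ‖(x - α • gradient f x - xstar) + α • (gradient f x - g)‖ := by
      congr 1; module
    _ ≤ ‖x - α • gradient f x - xstar‖ + α * ‖gradient f x - g‖ := by
      grw [norm_add_le, norm_smul, Real.norm_of_nonneg hα0.le]
    _ ≤ (1 - μ * α) * ‖x - xstar‖ + α * ‖gradient f x - g‖ := by grw [hexact]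
  grw [hinexact]
  exact sq_one_sub_mul_add_mul_le hμ hα0.le hαμ (norm_nonneg _) (norm_nonneg _)
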